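/- Let P_t(x) = (1/(2πt)) exp(−|x|²/(2t)) be the two-dimensional heat kernel. Then for all y ∈ ℝ² \ {0} and T ∈ (0,∞): ∫₀^T P_{2r}(y) dr = (1/(4π)) log(4T/|y|²) − γ_EM/(4π) + ε(4T/|y|²), where γ_EM is the Euler–Mascheroni constant and ε(a) := ∫₀^{1/a} (𝟙_{(0,1]}(t) − e^{−t})/(4πt) dt + (log⁻ a)/(4π) with log⁻ a = −log(min(a,1)). -/

import Mathlib

/-!
Substituting `t = ‖y‖² / (4r)` turns the left-hand side into `(4π)⁻¹ E₁(x)` with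
`x = ‖y‖² / (4T)` and `E₁(x) = ∫_x^∞ e^{-t} / t dt`. Integrating `e^{-t} log t` by parts on
`(0, x)` against `1 - e^{-t}` and on `(x, ∞)` against `-e^{-t}` gives
`E₁(x) = -γ_EM - log x + ∫_0^x (1 - e^{-t}) / t dt`. In `ε(1/x)` the indicator differs from `1`
only on `(1, x)`, where `1/t` integrates to `log⁺ x = log⁻ (1/x)`, so the two parts of `ε(1/x)`
collapse to `(4π)⁻¹ ∫_0^x (1 - e^{-t}) / t dt`.
-/

open MeasureTheory

/-- The two-dimensional heat kernel `P_t(x) = (2πt)⁻¹ exp(−‖x‖²/(2t))`. -/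
noncomputable def heatK (t : ℝ) (x : EuclideanSpace ℝ (Fin 2)) : ℝ :=
  (2 * Real.pi * t)⁻¹ * Real.exp (-‖x‖ ^ 2 / (2 * t))

/-- The Euler–Mascheroni constant, `γ_EM = −∫₀^∞ e^{−t} log t dt`. -/
noncomputable def gammaEM : ℝ := -∫ t in Set.Ioi (0:ℝ), Real.exp (-t) * Real.log t

/-- The remainder `ε(a) = ∫₀^{1/a} (𝟙_{(0,1]}(t) − e^{−t})/(4πt) dt + (log⁻ a)/(4π)`,
with `log⁻ a = −log(min(a,1))`. -/
noncomputable def epsRem (a : ℝ) : ℝ :=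
  (∫ t in Set.Ioo (0:ℝ) (1 / a),
      ((if 0 < t ∧ t ≤ 1 then (1:ℝ) else 0) - Real.exp (-t)) / (4 * Real.pi * t))
    + (-Real.log (min a 1)) / (4 * Real.pi)

open Set Filter Real
open scoped Topology

lemma abs_log_le_two_mul_rpow_neg_half_add {t : ℝ} (ht : 0 < t) :
    |log t| ≤ 2 * t ^ (-(1 / 2) : ℝ) + t := by
  rcases le_total t 1 with h | h
  · have hinv : log t⁻¹ ≤ t⁻¹ ^ (1 / 2 : ℝ) / (1 / 2) :=
      log_le_rpow_div (inv_nonneg.2 ht.le) one_half_pos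
    rw [log_inv, inv_rpow ht.le, ← rpow_neg ht.le] at hinv
    rw [abs_of_nonpos (log_nonpos ht.le h)]
    linarith
  · rw [abs_of_nonneg (log_nonneg h)]
    linarith [log_le_self ht.le, rpow_pos_of_pos ht (-(1 / 2) : ℝ)]

lemma integrableOn_exp_neg_mul_log : IntegrableOn (fun t ↦ exp (-t) * log t) (Ioi 0) := by
  have hdom : IntegrableOn
      (fun t ↦ 2 * (exp (-t) * t ^ ((1 / 2 : ℝ) - 1)) + exp (-t) * t ^ ((2 : ℝ) - 1)) (Ioi 0) :=
    ((GammaIntegral_convergent one_half_pos).const_mul 2).add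
      (GammaIntegral_convergent two_pos)
  refine hdom.mono' (by fun_prop : Measurable _).aestronglyMeasurable ?_
  filter_upwards [ae_restrict_mem measurableSet_Ioi] with t (ht : 0 < t)
  rw [norm_mul, norm_of_nonneg (exp_pos _).le, norm_eq_abs]
  calc exp (-t) * |log t| ≤ exp (-t) * (2 * t ^ (-(1 / 2) : ℝ) + t) :=
        mul_le_mul_of_nonneg_left (abs_log_le_two_mul_rpow_neg_half_add ht) (exp_pos _).le
    _ = _ := by norm_num; ring

lemma abs_one_sub_exp_neg_le {t : ℝ} (ht : 0 ≤ t) : |1 - exp (-t)| ≤ t := by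
  rw [abs_of_nonneg (sub_nonneg.2 (exp_le_one_iff.2 (neg_nonpos.2 ht)))]
  linarith [one_sub_le_exp_neg t]

lemma integrableOn_one_sub_exp_neg_div (x : ℝ) :
    IntegrableOn (fun t ↦ (1 - exp (-t)) / t) (Ioo 0 x) := by
  refine (integrableOn_const (C := (1 : ℝ)) (by simp)).mono'
    (by fun_prop : Measurable _).aestronglyMeasurable ?_
  filter_upwards [ae_restrict_mem measurableSet_Ioo] with t ⟨ht, _⟩
  rw [norm_div, norm_eq_abs, norm_of_nonneg ht.le, div_le_one ht]
  exact abs_one_sub_exp_neg_le ht.le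

lemma integrableOn_exp_neg_div {x : ℝ} (hx : 0 < x) :
    IntegrableOn (fun t ↦ exp (-t) / t) (Ioi x) := by
  have hexp : IntegrableOn (fun t ↦ exp (-t)) (Ioi x) := by
    simpa using exp_neg_integrableOn_Ioi x one_pos
  refine (hexp.const_mul x⁻¹).mono' (by fun_prop : Measurable _).aestronglyMeasurable ?_
  filter_upwards [ae_restrict_mem measurableSet_Ioi] with t (ht : x < t)
  rw [norm_of_nonneg (div_nonneg (exp_pos _).le (hx.trans ht).le), div_eq_mul_inv, mul_comm]
  exact mul_le_mul_of_nonneg_right (inv_anti₀ hx ht.le) (exp_pos _).le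

lemma integral_Ioi_exp_neg_mul_log {x : ℝ} (hx : 0 < x) :
    ∫ t in Ioi x, exp (-t) * log t = exp (-x) * log x + ∫ t in Ioi x, exp (-t) / t := by
  have hderiv : ∀ t ∈ Ici x, HasDerivAt (fun t ↦ -(exp (-t) * log t))
      (exp (-t) * log t - exp (-t) / t) t := fun t ht ↦ by
    refine ((hasDerivAt_neg t).exp.mul (hasDerivAt_log (hx.trans_le ht).ne')).neg.congr_deriv ?_
    ring
  have hlim : Tendsto (fun t ↦ -(exp (-t) * log t)) atTop (𝓝 0) := by
    have h := (isLittleO_log_id_atTop.mul_isBigO (Asymptotics.isBigO_refl (fun t ↦ exp (-t)) _))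
      |>.trans_tendsto (by simpa using tendsto_pow_mul_exp_neg_atTop_nhds_zero 1)
    simpa [mul_comm] using h.neg
  have h := integral_Ioi_of_hasDerivAt_of_tendsto' hderiv
    (((integrableOn_exp_neg_mul_log.mono_set (Ioi_subset_Ioi hx.le))).sub
      (integrableOn_exp_neg_div hx)) hlim
  rw [integral_sub (integrableOn_exp_neg_mul_log.mono_set (Ioi_subset_Ioi hx.le))
    (integrableOn_exp_neg_div hx)] at h
  linarith

lemma integral_Ioo_exp_neg_mul_log {x : ℝ} (hx : 0 < x) :
    ∫ t in Ioo 0 x, exp (-t) * log t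
      = (1 - exp (-x)) * log x - ∫ t in Ioo 0 x, (1 - exp (-t)) / t := by
  have hderiv : ∀ t ∈ Ioo 0 x, HasDerivAt (fun t ↦ (1 - exp (-t)) * log t)
      (exp (-t) * log t + (1 - exp (-t)) / t) t := fun t ht ↦ by
    refine (((hasDerivAt_neg t).exp.const_sub 1).mul (hasDerivAt_log ht.1.ne')).congr_deriv ?_
    ring
  have hint := (integrableOn_exp_neg_mul_log.mono_set Ioo_subset_Ioi_self).add
    (integrableOn_one_sub_exp_neg_div x)
  have hlim0 : Tendsto (fun t ↦ (1 - exp (-t)) * log t) (𝓝[>] 0) (𝓝 0) := by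
    have hmul : Tendsto (fun t ↦ t * log t) (𝓝[>] 0) (𝓝 0) := by
      simpa using (continuous_mul_log.tendsto 0).mono_left nhdsWithin_le_nhds
    refine squeeze_zero_norm' ?_ (by simpa using hmul.norm)
    filter_upwards [self_mem_nhdsWithin] with t (ht : 0 < t)
    rw [norm_mul, norm_eq_abs, abs_of_pos ht]
    exact mul_le_mul_of_nonneg_right (abs_one_sub_exp_neg_le ht.le) (norm_nonneg _)
  have hlimx : Tendsto (fun t ↦ (1 - exp (-t)) * log t) (𝓝[<] x) (𝓝 ((1 - exp (-x)) * log x)) :=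
    ((continuous_const.sub (continuous_exp.comp continuous_neg)).continuousAt.mul
      (continuousAt_log hx.ne')).tendsto.mono_left nhdsWithin_le_nhds
  have h := intervalIntegral.integral_eq_sub_of_hasDerivAt_of_tendsto hx hderiv
    ((intervalIntegrable_iff_integrableOn_Ioo_of_le hx.le).2 hint) hlim0 hlimx
  rw [intervalIntegral.integral_of_le hx.le, integral_Ioc_eq_integral_Ioo,
    integral_add (integrableOn_exp_neg_mul_log.mono_set Ioo_subset_Ioi_self)
      (integrableOn_one_sub_exp_neg_div x)] at h
  linarith

lemma integral_Ioi_exp_neg_div {x : ℝ} (hx : 0 < x) :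
    ∫ t in Ioi x, exp (-t) / t = -gammaEM - log x + ∫ t in Ioo 0 x, (1 - exp (-t)) / t := by
  have hsplit : ∫ t in Ioi 0, exp (-t) * log t
      = (∫ t in Ioo 0 x, exp (-t) * log t) + ∫ t in Ioi x, exp (-t) * log t := by
    rw [← integral_Ioc_eq_integral_Ioo, ← setIntegral_union Ioc_disjoint_Ioi_same
      measurableSet_Ioi (integrableOn_exp_neg_mul_log.mono_set Ioc_subset_Ioi_self)
      (integrableOn_exp_neg_mul_log.mono_set (Ioi_subset_Ioi hx.le)), Ioc_union_Ioi_eq_Ioi hx.le]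
  rw [gammaEM, neg_neg, hsplit, integral_Ioo_exp_neg_mul_log hx, integral_Ioi_exp_neg_mul_log hx]
  ring

lemma integral_Ioo_zero_eq_integral_Ioi_comp_div {E : Type*} [NormedAddCommGroup E]
    [NormedSpace ℝ E] (g : ℝ → E) {c T : ℝ} (hc : 0 < c) (hT : 0 < T) :
    ∫ r in Ioo 0 T, g r = ∫ t in Ioi (c / T), (c / t ^ 2) • g (c / t) := by
  have himage : (fun t ↦ c / t) '' Ioi (c / T) = Ioo 0 T := by
    ext r
    constructor
    · rintro ⟨t, ht, rfl⟩
      have ht0 : 0 < t := (div_pos hc hT).trans ht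
      exact ⟨div_pos hc ht0, (div_lt_iff₀ ht0).2 (by rw [mul_comm]; exact (div_lt_iff₀ hT).1 ht)⟩
    · rintro ⟨hr0, hrT⟩
      exact ⟨c / r, div_lt_div_of_pos_left hc hr0 hrT, div_div_cancel₀ hc.ne'⟩
  have hderiv : ∀ t ∈ Ioi (c / T),
      HasDerivWithinAt (fun t ↦ c / t) (-(c / t ^ 2)) (Ioi (c / T)) t := fun t ht ↦ by
    simp only [div_eq_mul_inv]
    exact ((hasDerivAt_inv ((div_pos hc hT).trans ht).ne').const_mul c).hasDerivWithinAt
      |>.congr_deriv (by ring)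
  have hanti : AntitoneOn (fun t ↦ c / t) (Ioi (c / T)) := fun s hs t _ hst ↦
    div_le_div_of_nonneg_left hc.le ((div_pos hc hT).trans hs) hst
  rw [← himage, integral_image_eq_integral_deriv_smul_of_antitoneOn measurableSet_Ioi hderiv hanti]
  simp only [neg_neg]

lemma integral_heatK_two_mul {y : EuclideanSpace ℝ (Fin 2)} (hy : y ≠ 0) {T : ℝ} (hT : 0 < T) :
    ∫ r in Ioo 0 T, heatK (2 * r) y
      = (4 * π)⁻¹ * ∫ t in Ioi (‖y‖ ^ 2 / (4 * T)), exp (-t) / t := by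
  have hc : 0 < ‖y‖ ^ 2 / 4 := by positivity
  rw [integral_Ioo_zero_eq_integral_Ioi_comp_div _ hc hT, div_div, ← integral_const_mul]
  refine setIntegral_congr_fun measurableSet_Ioi fun t (ht : _ < t) ↦ ?_
  have ht0 : 0 < t := (div_pos (pow_pos (norm_pos_iff.2 hy) 2) (by positivity)).trans ht
  have hexp : -‖y‖ ^ 2 / (2 * (2 * (‖y‖ ^ 2 / 4 / t))) = -t := by
    field_simp
    norm_num
  rw [smul_eq_mul, heatK, hexp]
  field_simp
  norm_num

lemma integrableOn_indicator_Ioi_one_inv (x : ℝ) :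
    IntegrableOn ((Ioi 1).indicator fun t : ℝ ↦ t⁻¹) (Ioo 0 x) := by
  refine (integrableOn_const (C := (1 : ℝ)) (by simp)).mono'
    (measurable_inv.indicator measurableSet_Ioi).aestronglyMeasurable (ae_of_all _ fun t ↦ ?_)
  by_cases ht : 1 < t
  · simpa [indicator_of_mem (mem_Ioi.2 ht), abs_of_pos (zero_lt_one.trans ht)] using
      inv_le_one_of_one_le₀ ht.le
  · simp [indicator_of_notMem (notMem_Ioi.2 (not_lt.1 ht))]

lemma setIntegral_Ioo_zero_indicator_Ioi_one_inv {x : ℝ} (hx : 0 ≤ x) :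
    ∫ t in Ioo 0 x, (Ioi 1).indicator (fun t ↦ t⁻¹) t = log⁺ x := by
  rw [setIntegral_indicator measurableSet_Ioi, Ioo_inter_Ioi, max_eq_right zero_le_one]
  rcases le_or_gt x 1 with hx1 | hx1
  · rw [Ioo_eq_empty hx1.not_gt, Measure.restrict_empty, integral_zero_measure,
      (posLog_eq_zero_iff x).2 (abs_le.2 ⟨by linarith, hx1⟩)]
  · rw [← integral_Ioc_eq_integral_Ioo, ← intervalIntegral.integral_of_le hx1.le,
      integral_inv_of_pos one_pos (zero_lt_one.trans hx1), div_one,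
      posLog_eq_log (by rw [abs_of_pos (zero_lt_one.trans hx1)]; exact hx1.le)]

lemma neg_log_min_one_eq_posLog_inv {a : ℝ} (ha : 0 < a) : -log (min a 1) = log⁺ a⁻¹ := by
  rcases le_total a 1 with ha1 | ha1
  · rw [min_eq_left ha1, posLog_eq_log (by rwa [abs_of_pos (inv_pos.2 ha), one_le_inv₀ ha]),
      log_inv]
  · rw [min_eq_right ha1, log_one, neg_zero, eq_comm, posLog_eq_zero_iff,
      abs_of_pos (inv_pos.2 ha)]
    exact inv_le_one_of_one_le₀ ha1

lemma epsRem_eq {a : ℝ} (ha : 0 < a) :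
    epsRem a = (4 * π)⁻¹ * ∫ t in Ioo 0 a⁻¹, (1 - exp (-t)) / t := by
  rw [epsRem, one_div, neg_log_min_one_eq_posLog_inv ha,
    ← setIntegral_Ioo_zero_indicator_Ioi_one_inv (inv_nonneg.2 ha.le), ← integral_const_mul,
    div_eq_inv_mul _ (4 * π), ← integral_const_mul, eq_sub_iff_add_eq.symm, ← integral_sub
      ((integrableOn_one_sub_exp_neg_div _).const_mul _)
      ((integrableOn_indicator_Ioi_one_inv _).const_mul _)]
  refine setIntegral_congr_fun measurableSet_Ioo fun t ⟨ht, _⟩ ↦ ?_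
  by_cases ht1 : t ≤ 1
  · rw [if_pos ⟨ht, ht1⟩, indicator_of_notMem (notMem_Ioi.2 ht1)]
    ring
  · rw [if_neg fun h ↦ ht1 h.2, indicator_of_mem (mem_Ioi.2 (not_le.1 ht1))]
    ring

theorem stmt_3 (y : EuclideanSpace ℝ (Fin 2)) (hy : y ≠ 0) (T : ℝ) (hT : 0 < T) :
    (∫ r in Set.Ioo (0:ℝ) T, heatK (2 * r) y)
      = (4 * Real.pi)⁻¹ * Real.log (4 * T / ‖y‖ ^ 2)
        - gammaEM / (4 * Real.pi) + epsRem (4 * T / ‖y‖ ^ 2) := by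
  have hy' : 0 < ‖y‖ := norm_pos_iff.2 hy
  have hx : 0 < ‖y‖ ^ 2 / (4 * T) := by positivity
  have hlog : log (4 * T / ‖y‖ ^ 2) = -log (‖y‖ ^ 2 / (4 * T)) := by rw [← log_inv, inv_div]
  rw [integral_heatK_two_mul hy hT, integral_Ioi_exp_neg_div hx, epsRem_eq (by positivity),
    inv_div, hlog]
  ring
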